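/- Let \(\mathcal{D}\) be a quasi-symmetric 2-(37,9,8) design with intersection numbers 1 and 3, and let C be a doubly even self-dual code of length 40 containing the linear span \(C_3 \subseteq \mathbb{F}_2^{40}\) of the vectors \((\chi_B, 1, 1, 1)\) over the blocks B of \(\mathcal{D}\). Then the minimum weight of C is exactly 8 (in particular, every nonzero codeword of C has weight at least 8 and C contains a codeword of weight 8). -/

import Mathlib

/-- The weight of a binary vector: its number of nonzero coordinates. -/
def wt {ι : Type*} [Fintype ι] (x : ι → ZMod 2) : ℕ :=
  (Finset.univ.filter fun i => x i ≠ 0).card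

/-- The characteristic vector of a block. -/
def chi {v : ℕ} (b : Finset (Fin v)) : Fin v → ZMod 2 :=
  fun i => if i ∈ b then 1 else 0

/-- The generator `(χ_B, 1, 1, 1)` of the code `C₃ ⊆ 𝔽₂^{40}` (with `v = 37`). -/
def gen3 {v : ℕ} (b : Finset (Fin v)) : Fin v ⊕ Fin 3 → ZMod 2 :=
  Sum.elim (chi b) fun _ => 1

/-!
Orthogonality to `(χ_B, 1, 1, 1)` says that every block `B` meets the support `U` of a codeword
`c` on the 37 points with the parity of the weight `t` of `c` on the last three coordinates.
If `wt c = |U| + t = 4`, counting incidences with `r = 36`, `λ = 8` and `b = 148` blocks gives a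
contradiction: for `t` odd each block meets `U`, so `148 ≤ 36 |U|`; for `t` even each block meets
`U` in `0` or at least `2` points, so `36 |U| ≤ 8 |U| (|U| - 1)`.

A doubly even self-dual code of length 40 contains the all-one vector, so if it had no words of
weight 4 or 8, its weights would lie in `{0, 12, 16, 20, 24, 28, 40}` with a distribution
symmetric under `w ↦ 40 - w`. Evaluating the MacWilliams identity at a few integers shows that
no such distribution exists.
-/

open Finset

section Weight

theorem ZMod.two_sum_eq_card_filter_ne_zero {κ : Type*} (s : Finset κ) (f : κ → ZMod 2) :
    ∑ i ∈ s, f i = #{i ∈ s | f i ≠ 0} := by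
  rw [← sum_filter_ne_zero, card_eq_sum_ones, Nat.cast_sum, Nat.cast_one]
  exact sum_congr rfl fun i hi => Fin.eq_one_of_ne_zero _ (mem_filter.mp hi).2

variable {ι κ : Type*} [Fintype ι] [Fintype κ]

theorem sum_eq_wt (x : ι → ZMod 2) : ∑ i, x i = wt x :=
  ZMod.two_sum_eq_card_filter_ne_zero univ x

theorem wt_eq_zero_iff {x : ι → ZMod 2} : wt x = 0 ↔ x = 0 := by
  simp [wt, funext_iff]

theorem wt_le_card (x : ι → ZMod 2) : wt x ≤ Fintype.card ι :=
  card_filter_le _ _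

theorem wt_one_add (x : ι → ZMod 2) : wt (1 + x) = Fintype.card ι - wt x := by
  have hcompl (a : ZMod 2) : (1 + a ≠ 0) ↔ ¬ a ≠ 0 := by revert a; decide
  simp only [wt, Pi.add_apply, Pi.one_apply, hcompl]
  rw [← card_univ, ← card_filter_add_card_filter_not (s := univ) (fun i => x i ≠ 0)]
  simp

theorem wt_sum_type (x : ι ⊕ κ → ZMod 2) : wt x = wt (x ∘ Sum.inl) + wt (x ∘ Sum.inr) := by
  simp only [wt, card_filter, Fintype.sum_sum_type, Function.comp_apply]

end Weight

section Design

variable {α : Type*} [DecidableEq α] {𝓑 : Finset (Finset α)} {k r lam : ℕ}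

theorem card_filter_mem_mul_sub_one [Fintype α] (hk : ∀ b ∈ 𝓑, #b = k)
    (hlam : ∀ T : Finset α, #T = 2 → #{b ∈ 𝓑 | T ⊆ b} = lam) (p : α) :
    #{b ∈ 𝓑 | p ∈ b} * (k - 1) = (Fintype.card α - 1) * lam := by
  have hpair : ∀ q ∈ univ.erase p, #{b ∈ {b ∈ 𝓑 | p ∈ b} | q ∈ b} = lam := by
    intro q hq
    rw [filter_filter, ← hlam {p, q} (card_pair (ne_of_mem_erase hq).symm)]
    simp [insert_subset_iff]
  have hsize : ∀ b ∈ {b ∈ 𝓑 | p ∈ b}, #(univ.erase p ∩ b) = k - 1 := by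
    intro b hb
    obtain ⟨hb, hpb⟩ := mem_filter.mp hb
    rw [← hk b hb, ← card_erase_of_mem hpb, erase_inter, univ_inter]
  rw [← sum_const_nat hsize, sum_card_inter hpair, card_erase_of_mem (mem_univ p), card_univ]

theorem sum_choose_card_inter (hlam : ∀ T : Finset α, #T = 2 → #{b ∈ 𝓑 | T ⊆ b} = lam)
    (U : Finset α) : ∑ b ∈ 𝓑, (#(U ∩ b)).choose 2 = (#U).choose 2 * lam := by
  have hpairs : ∀ b ∈ 𝓑, (#(U ∩ b)).choose 2 = #{T ∈ U.powersetCard 2 | T ⊆ b} := by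
    intro b _
    rw [← card_powersetCard]
    congr 1
    ext T
    simp only [mem_powersetCard, mem_filter, subset_inter_iff]
    tauto
  simp only [sum_congr rfl hpairs, card_filter]
  rw [sum_comm, sum_congr rfl fun T hT => ?_, sum_const, card_powersetCard, smul_eq_mul]
  rw [← card_filter, hlam T (mem_powersetCard.mp hT).2]

theorem Nat.le_two_mul_choose_two_of_even {j : ℕ} (hj : Even j) : j ≤ 2 * j.choose 2 := by
  rw [Nat.choose_two_right, Nat.mul_div_cancel' (Nat.even_mul_pred_self j).two_dvd]
  rcases j with _ | _ | j
  · rfl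
  · exact absurd hj (by decide)
  · exact Nat.le_mul_of_pos_right _ (by omega)

theorem card_mul_le_of_even_card_inter (hr : ∀ p, #{b ∈ 𝓑 | p ∈ b} = r)
    (hlam : ∀ T : Finset α, #T = 2 → #{b ∈ 𝓑 | T ⊆ b} = lam) (U : Finset α)
    (heven : ∀ b ∈ 𝓑, Even #(U ∩ b)) : #U * r ≤ 2 * ((#U).choose 2 * lam) := by
  rw [← sum_card_inter fun p _ => hr p, ← sum_choose_card_inter hlam, mul_sum]
  exact sum_le_sum fun b hb => Nat.le_two_mul_choose_two_of_even (heven b hb)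

theorem card_le_of_odd_card_inter (hr : ∀ p, #{b ∈ 𝓑 | p ∈ b} = r) (U : Finset α)
    (hodd : ∀ b ∈ 𝓑, Odd #(U ∩ b)) : #𝓑 ≤ #U * r := by
  rw [← sum_card_inter fun p _ => hr p, card_eq_sum_ones]
  exact sum_le_sum fun b hb => (hodd b hb).pos

end Design

section SelfDual

variable {V : Type*} [Fintype V]

def IsSelfDual (C : Submodule (ZMod 2) (V → ZMod 2)) : Prop :=
  ∀ z, z ∈ C ↔ ∀ c ∈ C, z ⬝ᵥ c = 0

theorem IsSelfDual.one_mem {C : Submodule (ZMod 2) (V → ZMod 2)} (hC : IsSelfDual C)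
    (heven : ∀ c ∈ C, 2 ∣ wt c) : 1 ∈ C :=
  (hC 1).mpr fun c hc => by
    rw [one_dotProduct, sum_eq_wt, ZMod.natCast_eq_zero_iff_even]
    exact even_iff_two_dvd.mpr (heven c hc)

def signChar : AddChar (ZMod 2) ℤ where
  toFun a := if a = 0 then 1 else -1
  map_zero_eq_one' := rfl
  map_add_eq_mul' := by decide

theorem signChar_apply (a : ZMod 2) : signChar a = if a = 0 then 1 else -1 := rfl

theorem signChar_eq_one_iff {a : ZMod 2} : signChar a = 1 ↔ a = 0 := by
  revert a; decide

theorem signChar_sum {κ : Type*} (s : Finset κ) (f : κ → ZMod 2) :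
    signChar (∑ i ∈ s, f i) = ∏ i ∈ s, signChar (f i) := by
  induction s using Finset.cons_induction with
  | empty => simp
  | cons a s ha ih => rw [sum_cons, prod_cons, AddChar.map_add_eq_mul, ih]

theorem one_add_mul_signChar_eq_sum (x : ℤ) (y : ZMod 2) :
    1 + x * signChar y = ∑ a : ZMod 2, (if a ≠ 0 then x else 1) * signChar (a * y) := by
  rw [show (univ : Finset (ZMod 2)) = {0, 1} from rfl, sum_pair zero_ne_one]
  simp

theorem one_add_mul_signChar (x : ℤ) (a : ZMod 2) :
    1 + x * signChar a = if a ≠ 0 then 1 - x else 1 + x := by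
  by_cases h : a = 0 <;> simp [signChar_apply, h, sub_eq_add_neg]

theorem prod_one_add_mul_signChar (x : ℤ) (c : V → ZMod 2) :
    ∏ i, (1 + x * signChar (c i)) = (1 - x) ^ wt c * (1 + x) ^ (Fintype.card V - wt c) := by
  simp only [one_add_mul_signChar, prod_ite, prod_const]
  rw [← card_univ, ← card_filter_add_card_filter_not (s := univ) (fun i => c i ≠ 0)]
  simp [wt]

variable [DecidableEq V] {C : Submodule (ZMod 2) (V → ZMod 2)} [DecidablePred (· ∈ C)]

theorem IsSelfDual.sum_signChar_dotProduct (hC : IsSelfDual C) (u : V → ZMod 2) :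
    ∑ c : C, signChar (u ⬝ᵥ c) = if u ∈ C then (Fintype.card C : ℤ) else 0 := by
  classical
  let ψ : AddChar C ℤ := signChar.compAddMonoidHom
    (AddMonoidHom.mk' (fun c : C => u ⬝ᵥ (c : V → ZMod 2)) fun a b => dotProduct_add _ _ _)
  have hψ : ψ = 0 ↔ u ∈ C := by
    rw [hC u, DFunLike.ext_iff, Subtype.forall]
    exact forall₂_congr fun c _ => signChar_eq_one_iff
  convert AddChar.sum_eq_ite ψ using 1
  · rfl
  · exact if_congr hψ.symm rfl rfl

theorem prod_one_add_mul_signChar_eq_sum (x : ℤ) (c : V → ZMod 2) :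
    ∏ i, (1 + x * signChar (c i)) = ∑ u : V → ZMod 2, x ^ wt u * signChar (u ⬝ᵥ c) := by
  simp only [one_add_mul_signChar_eq_sum, Fintype.prod_sum, prod_mul_distrib, prod_ite, prod_const]
  simp [dotProduct, signChar_sum, wt]

theorem IsSelfDual.macWilliams (hC : IsSelfDual C) (x : ℤ) :
    ∑ c : C, (1 - x) ^ wt (c : V → ZMod 2) * (1 + x) ^ (Fintype.card V - wt (c : V → ZMod 2))
      = Fintype.card C * ∑ c : C, x ^ wt (c : V → ZMod 2) := by
  calc _ = ∑ c : C, ∑ u : V → ZMod 2, x ^ wt u * signChar (u ⬝ᵥ c) := by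
          simp only [← prod_one_add_mul_signChar, prod_one_add_mul_signChar_eq_sum]
    _ = ∑ u : V → ZMod 2, x ^ wt u * ∑ c : C, signChar (u ⬝ᵥ c) := by
          rw [sum_comm]
          simp only [mul_sum]
    _ = ∑ u ∈ {u | u ∈ C}, x ^ wt u * Fintype.card C := by
          simp only [hC.sum_signChar_dotProduct, mul_ite, mul_zero, sum_filter]
    _ = _ := by
          rw [sum_subtype _ (fun u => mem_filter_univ u), ← sum_mul, mul_comm]

variable (C) in
def weightCount (w : ℕ) : ℕ := #{c : C | wt (c : V → ZMod 2) = w}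

theorem sum_eq_sum_weightCount {M : Type*} [AddCommMonoid M] (W : Finset ℕ)
    (hW : ∀ c : C, wt (c : V → ZMod 2) ∈ W) (f : ℕ → M) :
    ∑ c : C, f (wt (c : V → ZMod 2)) = ∑ w ∈ W, weightCount C w • f w := by
  rw [← sum_fiberwise_of_maps_to fun c _ => hW c]
  refine sum_congr rfl fun w _ => ?_
  rw [sum_congr rfl fun c hc => by rw [(mem_filter.mp hc).2], sum_const]
  rfl

theorem weightCount_zero : weightCount C 0 = 1 := by
  rw [weightCount, card_eq_one]
  exact ⟨0, by ext c; simp [wt_eq_zero_iff]⟩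

theorem weightCount_card_sub (h1 : 1 ∈ C) {w : ℕ} (hw : w ≤ Fintype.card V) :
    weightCount C (Fintype.card V - w) = weightCount C w :=
  card_equiv (Equiv.addLeft ⟨1, h1⟩) fun c => by
    have := wt_le_card (c : V → ZMod 2)
    simp only [mem_filter_univ, Equiv.coe_addLeft, Submodule.coe_add, wt_one_add]
    omega

end SelfDual

theorem not_selfDual_enumerator_forty_min_weight_twelve (N a b c : ℤ) (hN : 0 ≤ N)
    (h : ∀ x : ℤ, (1 + x) ^ 40 + a * ((1 - x) ^ 12 * (1 + x) ^ 28 + (1 - x) ^ 28 * (1 + x) ^ 12)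
      + b * ((1 - x) ^ 16 * (1 + x) ^ 24 + (1 - x) ^ 24 * (1 + x) ^ 16)
      + c * ((1 - x) ^ 20 * (1 + x) ^ 20) + (1 - x) ^ 40
      = N * (1 + a * (x ^ 12 + x ^ 28) + b * (x ^ 16 + x ^ 24) + c * x ^ 20 + x ^ 40)) :
    False := by
  -- `x = 0` says `N = 2 + 2a + 2b + c`, and then `x = 1` says `N ^ 2 = 2 ^ 40`.
  have hsq : N ^ 2 = (2 ^ 20) ^ 2 := by linear_combination -N * h 0 - h 1
  obtain rfl : N = 2 ^ 20 := (pow_left_inj₀ hN (by norm_num) two_ne_zero).mp hsq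
  -- At `N = 2 ^ 20` the equations at `x = 3, 4, 5, 7` are linear in `a, b, c`, and these
  -- coefficients span the relation between them.
  have : (11652523067537388939881759179785522786967327315329024000000000 : ℤ) = 0 := by
    linear_combination
      (-160601403679313887812843698759045981700 : ℤ) * h 3
      + (5889293820384978536660404404224000 : ℤ) * h 4
      + (-874562646826464690421978813500 : ℤ) * h 5
      + (413253129716191396493113 : ℤ) * h 7
  norm_num at this

theorem dotProduct_gen3 {v : ℕ} (x : Fin v ⊕ Fin 3 → ZMod 2) (b : Finset (Fin v)) :
    x ⬝ᵥ gen3 b =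
      ((#(univ.filter (fun i => x (Sum.inl i) ≠ 0) ∩ b) + wt (x ∘ Sum.inr) : ℕ) : ZMod 2) := by
  have hchi : ∑ i, x (Sum.inl i) * chi b i = ∑ i ∈ b, x (Sum.inl i) := by
    simp [chi, mul_ite, sum_ite_mem]
  rw [dotProduct, Fintype.sum_sum_type, Nat.cast_add, ← sum_eq_wt]
  simp only [gen3, Sum.elim_inl, Sum.elim_inr, mul_one, hchi,
    ZMod.two_sum_eq_card_filter_ne_zero, Function.comp_apply]
  rw [filter_inter, univ_inter]

theorem wt_ne_four_of_dotProduct_gen3 {𝓑 : Finset (Finset (Fin 37))} (hk : ∀ b ∈ 𝓑, #b = 9)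
    (hlam : ∀ T : Finset (Fin 37), #T = 2 → #{b ∈ 𝓑 | T ⊆ b} = 8)
    {c : Fin 37 ⊕ Fin 3 → ZMod 2} (hc : ∀ b ∈ 𝓑, c ⬝ᵥ gen3 b = 0) : wt c ≠ 4 := by
  intro h4
  set U : Finset (Fin 37) := {i | c (Sum.inl i) ≠ 0}
  set t := wt (c ∘ Sum.inr)
  have hUt : #U + t = 4 := by rw [← h4, wt_sum_type c]; rfl
  have ht : t ≤ 3 := wt_le_card _ |>.trans (by simp)
  have hr (p : Fin 37) : #{b ∈ 𝓑 | p ∈ b} = 36 := by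
    have := card_filter_mem_mul_sub_one hk hlam p
    simp only [Fintype.card_fin] at this
    omega
  have hpar : ∀ b ∈ 𝓑, (Even #(U ∩ b) ↔ Even t) := fun b hb =>
    Nat.even_add.mp <| ZMod.natCast_eq_zero_iff_even.mp <|
      (dotProduct_gen3 c b).symm.trans (hc b hb)
  rcases Nat.even_or_odd t with ht_even | ht_odd
  · have hU := card_mul_le_of_even_card_inter hr hlam U fun b hb => (hpar b hb).mpr ht_even
    obtain ⟨m, hm⟩ := ht_even
    obtain hU4 | hU2 : #U = 4 ∨ #U = 2 := by omega
    · rw [hU4] at hU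
      exact absurd hU (by decide)
    · rw [hU2] at hU
      exact absurd hU (by decide)
  · have hblocks : #𝓑 * 9 = 37 * 36 := by
      rw [← sum_const_nat hk, sum_card hr, Fintype.card_fin]
    have hU := card_le_of_odd_card_inter hr U fun b hb =>
      Nat.not_even_iff_odd.mp fun h => Nat.not_even_iff_odd.mpr ht_odd ((hpar b hb).mp h)
    omega

theorem IsSelfDual.exists_wt_eq_four_or_eight {V : Type*} [Fintype V] [DecidableEq V]
    {C : Submodule (ZMod 2) (V → ZMod 2)} (hC : IsSelfDual C) (hlen : Fintype.card V = 40)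
    (hde : ∀ c ∈ C, 4 ∣ wt c) : ∃ c ∈ C, wt c = 4 ∨ wt c = 8 := by
  classical
  by_contra! h
  have h1 : (1 : V → ZMod 2) ∈ C := hC.one_mem fun c hc => (dvd_trans (by norm_num) (hde c hc))
  let W : Finset ℕ := {0, 12, 16, 20, 24, 28, 40}
  have hW (c : C) : wt (c : V → ZMod 2) ∈ W := by
    obtain ⟨c, hc⟩ := c
    have hcompl := h _ (C.add_mem h1 hc)
    rw [wt_one_add, hlen] at hcompl
    have := wt_le_card c
    have := hde c hc
    have := h c hc
    simp only [W, mem_insert, mem_singleton]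
    omega
  have hsymm (w : ℕ) (hw : w ≤ 40) : weightCount C (40 - w) = weightCount C w := by
    rw [← hlen] at hw ⊢
    exact weightCount_card_sub h1 hw
  have hA40 : weightCount C 40 = 1 := by rw [← weightCount_zero (C := C), ← hsymm 0 (by norm_num)]
  refine not_selfDual_enumerator_forty_min_weight_twelve (Fintype.card C) (weightCount C 12)
    (weightCount C 16) (weightCount C 20) (by positivity) fun x => ?_
  have hmac := hC.macWilliams x
  rw [hlen, sum_eq_sum_weightCount W hW fun w => (1 - x) ^ w * (1 + x) ^ (40 - w),
    sum_eq_sum_weightCount W hW fun w => x ^ w] at hmac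
  have hexpand (g : ℕ → ℤ) : ∑ w ∈ W, g w = g 0 + g 12 + g 16 + g 20 + g 24 + g 28 + g 40 := by
    simp [W, add_assoc]
  rw [hexpand, hexpand, weightCount_zero, hA40, hsymm 12 (by norm_num), hsymm 16 (by norm_num)]
    at hmac
  simp only [nsmul_eq_mul, Nat.cast_one] at hmac
  linear_combination hmac

theorem selfdual_code_min_weight_eight_general (𝓑 : Finset (Finset (Fin 37)))
    (hk : ∀ b ∈ 𝓑, b.card = 9)
    (hlam : ∀ T : Finset (Fin 37), T.card = 2 → (𝓑.filter fun b => T ⊆ b).card = 8)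
    (C : Submodule (ZMod 2) (Fin 37 ⊕ Fin 3 → ZMod 2))
    (hselfdual : ∀ z : Fin 37 ⊕ Fin 3 → ZMod 2,
      z ∈ C ↔ ∀ c ∈ C, ∑ i, z i * c i = 0)
    (hde : ∀ c ∈ C, 4 ∣ wt c)
    (hsub : Submodule.span (ZMod 2) (gen3 '' (𝓑 : Set (Finset (Fin 37)))) ≤ C) :
    (∀ c ∈ C, c ≠ 0 → 8 ≤ wt c) ∧ (∃ c ∈ C, wt c = 8) := by
  have hno4 (c) (hc : c ∈ C) : wt c ≠ 4 :=
    wt_ne_four_of_dotProduct_gen3 hk hlam fun b hb =>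
      (hselfdual c).mp hc _ (hsub (Submodule.subset_span (Set.mem_image_of_mem _ hb)))
  refine ⟨fun c hc hc0 => ?_, ?_⟩
  · have := hde c hc
    have := hno4 c hc
    have := mt wt_eq_zero_iff.mp hc0
    omega
  · obtain ⟨c, hc, h4 | h8⟩ := IsSelfDual.exists_wt_eq_four_or_eight hselfdual (by simp) hde
    · exact absurd h4 (hno4 c hc)
    · exact ⟨c, hc, h8⟩

/-- Let `𝓑` be the block set of a quasi-symmetric 2-(37,9,8) design with
intersection numbers 1 and 3, and let `C` be a doubly even self-dual code of
length 40 containing the span `C₃` of the vectors `(χ_B, 1, 1, 1)`.  Then the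
minimum weight of `C` is exactly 8: every nonzero codeword has weight at least 8,
and `C` contains a codeword of weight 8. -/
theorem selfdual_code_min_weight_eight (𝓑 : Finset (Finset (Fin 37)))
    (hk : ∀ b ∈ 𝓑, b.card = 9)
    (hlam : ∀ T : Finset (Fin 37), T.card = 2 → (𝓑.filter fun b => T ⊆ b).card = 8)
    (hquasi : ∀ b₁ ∈ 𝓑, ∀ b₂ ∈ 𝓑, b₁ ≠ b₂ →
      (b₁ ∩ b₂).card = 1 ∨ (b₁ ∩ b₂).card = 3)
    (C : Submodule (ZMod 2) (Fin 37 ⊕ Fin 3 → ZMod 2))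
    (hselfdual : ∀ z : Fin 37 ⊕ Fin 3 → ZMod 2,
      z ∈ C ↔ ∀ c ∈ C, ∑ i, z i * c i = 0)
    (hde : ∀ c ∈ C, 4 ∣ wt c)
    (hsub : Submodule.span (ZMod 2) (gen3 '' (𝓑 : Set (Finset (Fin 37)))) ≤ C) :
    (∀ c ∈ C, c ≠ 0 → 8 ≤ wt c) ∧ (∃ c ∈ C, wt c = 8) :=
  selfdual_code_min_weight_eight_general 𝓑 hk hlam C hselfdual hde hsub
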